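/- (Van Hamme) For every positive integer n: sum_{i=1}^n [n choose i]_q * (-1)^{i-1} q^{binom(i+1,2)} / (1-q^i) = sum_{i=1}^n q^i/(1-q^i). -/

import Mathlib

open Finset

variable {F : Type*} [Field F]

/-- `(q;q)_n = (1-q)(1-q^2)...(1-q^n)` -/
def qfac (q : F) (n : ℕ) : F := ∏ j ∈ Finset.range n, (1 - q ^ (j + 1))

/-- `(z;q)_k = (1-z)(1-zq)...(1-zq^{k-1})` -/
def qpoch (z q : F) (k : ℕ) : F := ∏ j ∈ Finset.range k, (1 - z * q ^ j)

/-- Gaussian binomial coefficient `[n choose k]_q` -/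
def qbinom (q : F) (n k : ℕ) : F := qfac q n / (qfac q k * qfac q (n - k))

/-- Sum over weakly increasing `m`-tuples `lo ≤ i_1 ≤ ... ≤ i_m ≤ n` of
`∏_j q^{i_j}/(1-q^{i_j})` (equal to `1` when `m = 0`). -/
def chainSum (q : F) (lo n m : ℕ) : F :=
  ∑ c ∈ Finset.univ.filter (fun c : Fin m → Fin (n + 1) =>
      (∀ j k : Fin m, j ≤ k → c j ≤ c k) ∧ ∀ j, lo ≤ (c j : ℕ)),
    ∏ j, q ^ (c j : ℕ) / (1 - q ^ (c j : ℕ))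

/-- Complete homogeneous symmetric function `h_m` of the variables
`x lo, x (lo+1), ..., x n`. -/
def hSum {R : Type*} [CommRing R] (x : ℕ → R) (lo n m : ℕ) : R :=
  ∑ c ∈ Finset.univ.filter (fun c : Fin m → Fin (n + 1) =>
      (∀ j k : Fin m, j ≤ k → c j ≤ c k) ∧ ∀ j, lo ≤ (c j : ℕ)),
    ∏ j, x (c j : ℕ)

/-!
Write `A_m(g) = ∑_{k=0}^m (-1)^k [m,k]_q q^{binom(k+1,2)} g(k)`. The q-Pascal rule
`[m+1,k+1] = [m,k+1] + q^{m-k} [m,k]` gives `A_{m+1}(g) = A_m(g) - q^{m+1} A_m(g(· + 1))`.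
Applied to `g(k) = 1/(1 - x q^k)` this proves, by induction on `m` for all `x` at once, the partial
fraction expansion `A_m(g) = (q;q)_m / (x;q)_{m+1}`. The left side of the theorem is `-A_n(g)` for
`g(k) = 1/(1 - q^k)` (`k ≥ 1`), `g(0) = 0`, and the same recursion together with the case `x = q`
of the expansion shows that it grows by `q^{n+1}/(1 - q^{n+1})` when `n` is replaced by `n + 1`.
-/

theorem qfac_zero (q : F) : qfac q 0 = 1 := prod_range_zero _

theorem qfac_succ (q : F) (n : ℕ) : qfac q (n + 1) = qfac q n * (1 - q ^ (n + 1)) :=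
  prod_range_succ _ _

theorem qfac_ne_zero {q : F} {n : ℕ} (hq : ∀ i ∈ Icc 1 n, q ^ i ≠ 1) : qfac q n ≠ 0 :=
  prod_ne_zero_iff.2 fun j hj =>
    sub_ne_zero.2 (hq (j + 1) (mem_Icc.2 ⟨by omega, mem_range.1 hj⟩)).symm

theorem qfac_ne_zero_of_le {q : F} {m n : ℕ} (h : qfac q n ≠ 0) (hmn : m ≤ n) :
    qfac q m ≠ 0 :=
  prod_ne_zero_iff.2 fun j hj =>
    prod_ne_zero_iff.1 h j (mem_range.2 ((mem_range.1 hj).trans_le hmn))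

theorem one_sub_pow_ne_zero_of_qfac_ne_zero {q : F} {n i : ℕ} (h : qfac q n ≠ 0)
    (hi : 1 ≤ i) (hin : i ≤ n) : 1 - q ^ i ≠ 0 := by
  obtain ⟨j, rfl⟩ : ∃ j, i = j + 1 := ⟨i - 1, by omega⟩
  exact prod_ne_zero_iff.1 h j (mem_range.2 (by omega))

theorem qbinom_zero_right {q : F} {n : ℕ} (h : qfac q n ≠ 0) : qbinom q n 0 = 1 := by
  rw [qbinom, Nat.sub_zero, qfac_zero, one_mul, div_self h]

theorem qbinom_self {q : F} {n : ℕ} (h : qfac q n ≠ 0) : qbinom q n n = 1 := by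
  rw [qbinom, Nat.sub_self, qfac_zero, mul_one, div_self h]

theorem qbinom_succ_succ {q : F} {m k : ℕ} (h : qfac q (m + 1) ≠ 0) (hk : k < m) :
    qbinom q (m + 1) (k + 1) = qbinom q m (k + 1) + q ^ (m - k) * qbinom q m k := by
  obtain ⟨d, rfl⟩ : ∃ d, m = k + 1 + d := ⟨m - k - 1, by omega⟩
  have hk := qfac_ne_zero_of_le (q := q) h (m := k) (by omega)
  have hd := qfac_ne_zero_of_le (q := q) h (m := d) (by omega)
  have hm := qfac_ne_zero_of_le (q := q) h (m := k + 1 + d) (by omega)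
  have hk1 := one_sub_pow_ne_zero_of_qfac_ne_zero h (i := k + 1) (by omega) (by omega)
  have hd1 := one_sub_pow_ne_zero_of_qfac_ne_zero h (i := d + 1) (by omega) (by omega)
  rw [qbinom, qbinom, qbinom, show k + 1 + d + 1 - (k + 1) = d + 1 by omega,
    show k + 1 + d - (k + 1) = d by omega, show k + 1 + d - k = d + 1 by omega,
    qfac_succ q (k + 1 + d), qfac_succ q k, qfac_succ q d]
  field_simp
  ring

theorem sum_range_qbinom_succ_mul {q : F} {m : ℕ} (h : qfac q (m + 1) ≠ 0) (f : ℕ → F) :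
    ∑ k ∈ range (m + 2), qbinom q (m + 1) k * f k
      = ∑ k ∈ range (m + 1), qbinom q m k * f k
        + ∑ k ∈ range (m + 1), q ^ (m - k) * qbinom q m k * f (k + 1) := by
  have hm := qfac_ne_zero_of_le h m.le_succ
  have pascal : ∑ k ∈ range m, qbinom q (m + 1) (k + 1) * f (k + 1)
      = ∑ k ∈ range m, qbinom q m (k + 1) * f (k + 1)
        + ∑ k ∈ range m, q ^ (m - k) * qbinom q m k * f (k + 1) := by
    rw [← sum_add_distrib]
    refine sum_congr rfl fun k hk => ?_
    rw [qbinom_succ_succ h (mem_range.1 hk)]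
    ring
  rw [sum_range_succ', sum_range_succ, pascal, sum_range_succ' (fun k => qbinom q m k * f k),
    sum_range_succ (fun k => q ^ (m - k) * qbinom q m k * f (k + 1)), qbinom_self h,
    qbinom_self hm, qbinom_zero_right h, qbinom_zero_right hm, Nat.sub_self]
  ring

def qbinomAltSum (q : F) (m : ℕ) (g : ℕ → F) : F :=
  ∑ k ∈ range (m + 1), qbinom q m k * ((-1) ^ k * q ^ ((k + 1).choose 2) * g k)

theorem qbinomAltSum_zero {q : F} (g : ℕ → F) : qbinomAltSum q 0 g = g 0 := by
  simp [qbinomAltSum, qbinom_zero_right, qfac_zero]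

theorem qbinomAltSum_succ {q : F} {m : ℕ} (h : qfac q (m + 1) ≠ 0) (g : ℕ → F) :
    qbinomAltSum q (m + 1) g
      = qbinomAltSum q m g - q ^ (m + 1) * qbinomAltSum q m (g ∘ (· + 1)) := by
  rw [qbinomAltSum, sum_range_qbinom_succ_mul h, qbinomAltSum, qbinomAltSum, mul_sum,
    sub_eq_add_neg, ← sum_neg_distrib]
  congr 1
  refine sum_congr rfl fun k hk => ?_
  have hq :
      q ^ (m - k) * q ^ ((k + 1 + 1).choose 2) = q ^ (m + 1) * q ^ ((k + 1).choose 2) := by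
    have hk := mem_range.1 hk
    have hc : (k + 1 + 1).choose 2 = k + 1 + (k + 1).choose 2 := by
      rw [Nat.choose_succ_succ, Nat.choose_one_right]
    rw [← pow_add, ← pow_add, hc]
    congr 1
    omega
  simp only [Function.comp_apply, pow_succ]
  linear_combination (-(qbinom q m k * (-1) ^ k * g (k + 1))) * hq

theorem qpoch_succ (x q : F) (n : ℕ) : qpoch x q (n + 1) = qpoch x q n * (1 - x * q ^ n) :=
  prod_range_succ _ _

theorem qpoch_succ' (x q : F) (n : ℕ) : qpoch x q (n + 1) = (1 - x) * qpoch (x * q) q n := by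
  rw [qpoch, prod_range_succ', pow_zero, mul_one, mul_comm]
  simp only [qpoch, pow_succ', mul_assoc]

theorem qpoch_self (q : F) (n : ℕ) : qpoch q q n = qfac q n :=
  prod_congr rfl fun j _ => by rw [pow_succ']

theorem qbinomAltSum_inv_one_sub_mul_pow {q x : F} {m : ℕ} (hq : qfac q m ≠ 0)
    (hx : qpoch x q (m + 1) ≠ 0) :
    qbinomAltSum q m (fun k => (1 - x * q ^ k)⁻¹) = qfac q m / qpoch x q (m + 1) := by
  induction m generalizing x with
  | zero => simp [qbinomAltSum_zero, qfac_zero, qpoch]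
  | succ m ih =>
    have hm := qfac_ne_zero_of_le hq m.le_succ
    have hc : qpoch x q (m + 1) * (1 - x * q ^ (m + 1)) = (1 - x) * qpoch (x * q) q (m + 1) := by
      rw [← qpoch_succ, qpoch_succ']
    obtain ⟨ha, hc0⟩ : qpoch x q (m + 1) ≠ 0 ∧ 1 - x * q ^ (m + 1) ≠ 0 := by
      rwa [qpoch_succ, mul_ne_zero_iff] at hx
    have hb : qpoch (x * q) q (m + 1) ≠ 0 := right_ne_zero_of_mul (by rwa [← qpoch_succ'])
    have hshift :
        (fun k => (1 - x * q ^ k)⁻¹) ∘ (· + 1) = fun k => (1 - x * q * q ^ k)⁻¹ := by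
      funext k
      simp only [Function.comp_apply, pow_succ', mul_assoc]
    rw [qbinomAltSum_succ hq, hshift, ih hm ha, ih hm hb, qfac_succ,
      qpoch_succ x q (m + 1)]
    generalize q ^ (m + 1) = p at hc hc0 ⊢
    field_simp
    rw [eq_div_iff (by rwa [mul_comm p x])]
    linear_combination (-p) * hc

theorem neg_qbinomAltSum_inv_one_sub_pow {q : F} (n : ℕ) (h : qfac q n ≠ 0) :
    -qbinomAltSum q n (fun k => (1 - q ^ k)⁻¹) = ∑ i ∈ Icc 1 n, q ^ i / (1 - q ^ i) := by
  induction n with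
  -- the `k = 0` term carries the junk value `(1 - q ^ 0)⁻¹ = 0⁻¹ = 0`
  | zero => simp [qbinomAltSum_zero]
  | succ n ih =>
    have hn := qfac_ne_zero_of_le h n.le_succ
    have hn1 := one_sub_pow_ne_zero_of_qfac_ne_zero h (i := n + 1) (by omega) le_rfl
    have hshift : (fun k => (1 - q ^ k)⁻¹) ∘ (· + 1) = fun k => (1 - q * q ^ k)⁻¹ :=
      funext fun k => by simp only [Function.comp_apply, pow_succ']
    rw [qbinomAltSum_succ h, hshift,
      qbinomAltSum_inv_one_sub_mul_pow hn (by rwa [qpoch_self]), qpoch_self, qfac_succ,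
      sum_Icc_succ_top (by omega), ← ih hn]
    field_simp
    ring

theorem van_hamme_general (q : F) (n : ℕ)
    (hq : ∀ i ∈ Finset.Icc 1 n, q ^ i ≠ 1) :
    ∑ i ∈ Finset.Icc 1 n,
        qbinom q n i * ((-1) ^ (i + 1) * q ^ ((i + 1).choose 2)) / (1 - q ^ i)
      = ∑ i ∈ Finset.Icc 1 n, q ^ i / (1 - q ^ i) := by
  rw [← neg_qbinomAltSum_inv_one_sub_pow n (qfac_ne_zero hq), qbinomAltSum,
    Nat.range_succ_eq_Icc_zero, ← insert_Icc_add_one_left_eq_Icc n.zero_le,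
    sum_insert (by simp)]
  simp only [pow_zero, sub_self, inv_zero, mul_zero, zero_add, ← sum_neg_distrib]
  refine sum_congr rfl fun i _ => ?_
  ring

theorem van_hamme (q : F) (n : ℕ) (hn : 1 ≤ n)
    (hq : ∀ i ∈ Finset.Icc 1 n, q ^ i ≠ 1) :
    ∑ i ∈ Finset.Icc 1 n,
        qbinom q n i * ((-1) ^ (i + 1) * q ^ ((i + 1).choose 2)) / (1 - q ^ i)
      = ∑ i ∈ Finset.Icc 1 n, q ^ i / (1 - q ^ i) :=
  van_hamme_general q n hq
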